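/- arXiv:1105.3037 — 4 statements merged into one kernel-verified Lean document; each statement's English description precedes it below -/
import Mathlib

section
/- Let N ∈ ℕ and let μ_N : X → U be a feedback law with closed-loop trajectory x(n+1) = f(x(n), μ_N(x(n))), x(0) = x₀ ∈ X. Suppose the finite-horizon optimal value function V_N satisfies the relaxed Lyapunov inequality V_N(x(n)) ≥ V_N(x(n+1)) + α·ℓ(x(n), μ_N(x(n))) for some α ∈ [0,1] and all n ∈ ℕ. Then for all n ∈ ℕ: α·V_∞(x(n)) ≤ α·V_∞^{μ_N}(x(n)) ≤ V_N(x(n)) ≤ V_∞(x(n)). -/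
open scoped ENNReal NNReal

noncomputable section

variable {X U : Type*}

/-- Open-loop trajectory: `x_u(·, x₀)` with `x_u(0,x₀) = x₀`,
`x_u(k+1,x₀) = f(x_u(k,x₀), u(k))`. -/
def otraj (f : X → U → X) (u : ℕ → U) (x₀ : X) : ℕ → X
  | 0 => x₀
  | k + 1 => f (otraj f u x₀ k) (u k)

/-- Closed-loop trajectory under the feedback law `μ`. -/
def ctraj (f : X → U → X) (μ : X → U) (x₀ : X) : ℕ → X
  | 0 => x₀
  | n + 1 => f (ctraj f μ x₀ n) (μ (ctraj f μ x₀ n))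

/-- Finite-horizon cost `J_N(x₀, u)`. -/
def costJ (f : X → U → X) (ℓ : X → U → ℝ≥0) (N : ℕ) (x₀ : X) (u : ℕ → U) : ℝ≥0 :=
  ∑ k ∈ Finset.range N, ℓ (otraj f u x₀ k) (u k)

/-- Finite-horizon optimal value function `V_N(x₀)`. -/
def VN (f : X → U → X) (ℓ : X → U → ℝ≥0) (N : ℕ) (x₀ : X) : ℝ≥0 :=
  ⨅ u : ℕ → U, costJ f ℓ N x₀ u

/-- Infinite-horizon optimal value function `V_∞(x₀)`, with values in `[0,∞]`. -/
def Vinf (f : X → U → X) (ℓ : X → U → ℝ≥0) (x₀ : X) : ℝ≥0∞ :=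
  ⨅ u : ℕ → U, ∑' k, (ℓ (otraj f u x₀ k) (u k) : ℝ≥0∞)

/-- Closed-loop infinite-horizon cost `V_∞^μ(x₀)`, with values in `[0,∞]`. -/
def Vcl (f : X → U → X) (ℓ : X → U → ℝ≥0) (μ : X → U) (x₀ : X) : ℝ≥0∞ :=
  ∑' n, (ℓ (ctraj f μ x₀ n) (μ (ctraj f μ x₀ n)) : ℝ≥0∞)

/-! Summing the relaxed Lyapunov inequality along the closed loop telescopes:
`α` times any partial sum of the closed-loop stage costs is bounded by the value of `V_N`
at the start, hence so is `α V_∞^{μ_N}`. The outer inequalities compare infima: the closed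
loop is one admissible open-loop control, and a finite-horizon cost is a partial sum of the
infinite-horizon cost. -/

theorem ENNReal.sum_range_add_le_of_succ_add_le {V c : ℕ → ℝ≥0∞}
    (h : ∀ k, V (k + 1) + c k ≤ V k) (m : ℕ) :
    ∑ k ∈ Finset.range m, c k + V m ≤ V 0 := by
  induction m with
  | zero => simp
  | succ m ih =>
    calc ∑ k ∈ Finset.range (m + 1), c k + V (m + 1)
        = ∑ k ∈ Finset.range m, c k + (V (m + 1) + c m) := by
          rw [Finset.sum_range_succ]; ring
      _ ≤ ∑ k ∈ Finset.range m, c k + V m := by gcongr; exact h m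
      _ ≤ V 0 := ih

theorem ENNReal.tsum_le_of_succ_add_le {V c : ℕ → ℝ≥0∞}
    (h : ∀ k, V (k + 1) + c k ≤ V k) : ∑' k, c k ≤ V 0 :=
  ENNReal.tsum_le_of_sum_range_le fun m =>
    le_trans le_self_add (ENNReal.sum_range_add_le_of_succ_add_le h m)

section

variable (f : X → U → X)

theorem ctraj_eq_add_of_succ {μ : X → U} {x : ℕ → X}
    (hx : ∀ n, x (n + 1) = f (x n) (μ (x n))) (n k : ℕ) :
    ctraj f μ (x n) k = x (n + k) := by
  induction k with
  | zero => rfl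
  | succ k ih => rw [ctraj, ih, ← add_assoc, hx]

theorem otraj_ctraj (μ : X → U) (y : X) (k : ℕ) :
    otraj f (fun j => μ (ctraj f μ y j)) y k = ctraj f μ y k := by
  induction k with
  | zero => rfl
  | succ k ih => rw [otraj, ctraj, ih]

variable (ℓ : X → U → ℝ≥0)

theorem Vinf_le_Vcl (μ : X → U) (y : X) : Vinf f ℓ y ≤ Vcl f ℓ μ y :=
  iInf_le_of_le (fun j => μ (ctraj f μ y j)) (by simp only [otraj_ctraj, Vcl, le_rfl])

theorem VN_le_Vinf (N : ℕ) (y : X) : (VN f ℓ N y : ℝ≥0∞) ≤ Vinf f ℓ y := by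
  refine le_iInf fun u => ?_
  calc (VN f ℓ N y : ℝ≥0∞) ≤ costJ f ℓ N y u := by
        exact_mod_cast ciInf_le (OrderBot.bddBelow _) u
    _ ≤ ∑' k, (ℓ (otraj f u y k) (u k) : ℝ≥0∞) := by
        rw [costJ, ENNReal.ofNNReal_finsetSum]
        exact ENNReal.sum_le_tsum _

theorem mul_Vcl_le_VN_of_lyapunov {N : ℕ} {μ : X → U} {α : ℝ≥0} {x : ℕ → X}
    (hx : ∀ n, x (n + 1) = f (x n) (μ (x n)))
    (hV : ∀ n, VN f ℓ N (x (n + 1)) + α * ℓ (x n) (μ (x n)) ≤ VN f ℓ N (x n)) (n : ℕ) :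
    (α : ℝ≥0∞) * Vcl f ℓ μ (x n) ≤ VN f ℓ N (x n) := by
  rw [Vcl, ← ENNReal.tsum_mul_left]
  simp only [ctraj_eq_add_of_succ f hx n]
  refine ENNReal.tsum_le_of_succ_add_le (V := fun k => VN f ℓ N (x (n + k))) fun k => ?_
  exact_mod_cast hV (n + k)

end

theorem statement1_general {X U : Type*}
    (f : X → U → X) (ℓ : X → U → ℝ≥0)
    (N : ℕ) (μN : X → U) (x : ℕ → X)
    (hx : ∀ n : ℕ, x (n + 1) = f (x n) (μN (x n)))
    (α : ℝ≥0)
    (hV : ∀ n : ℕ,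
      VN f ℓ N (x (n + 1)) + α * ℓ (x n) (μN (x n)) ≤ VN f ℓ N (x n)) :
    ∀ n : ℕ,
      (α : ℝ≥0∞) * Vinf f ℓ (x n) ≤ (α : ℝ≥0∞) * Vcl f ℓ μN (x n) ∧
      (α : ℝ≥0∞) * Vcl f ℓ μN (x n) ≤ (VN f ℓ N (x n) : ℝ≥0∞) ∧
      (VN f ℓ N (x n) : ℝ≥0∞) ≤ Vinf f ℓ (x n) := fun n =>
  ⟨mul_le_mul_right (Vinf_le_Vcl f ℓ μN (x n)) _,
    mul_Vcl_le_VN_of_lyapunov f ℓ hx hV n, VN_le_Vinf f ℓ N (x n)⟩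

/-- Proposition 3 of Grüne–Pannek. If the finite-horizon optimal
value function `V_N` satisfies the relaxed Lyapunov inequality along the closed loop
of the NMPC feedback `μ_N` for some `α ∈ [0,1]`, then
`α V_∞(x(n)) ≤ α V_∞^{μ_N}(x(n)) ≤ V_N(x(n)) ≤ V_∞(x(n))` for all `n`. -/
theorem statement1 {X U : Type*} [Nonempty X] [Nonempty U]
    (f : X → U → X) (ℓ : X → U → ℝ≥0)
    (N : ℕ) (μN : X → U) (x₀ : X) (x : ℕ → X)
    (hx0 : x 0 = x₀)
    (hx : ∀ n : ℕ, x (n + 1) = f (x n) (μN (x n)))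
    (α : ℝ≥0) (hα : α ≤ 1)
    (hV : ∀ n : ℕ,
      VN f ℓ N (x (n + 1)) + α * ℓ (x n) (μN (x n)) ≤ VN f ℓ N (x n)) :
    ∀ n : ℕ,
      (α : ℝ≥0∞) * Vinf f ℓ (x n) ≤ (α : ℝ≥0∞) * Vcl f ℓ μN (x n) ∧
      (α : ℝ≥0∞) * Vcl f ℓ μN (x n) ≤ (VN f ℓ N (x n) : ℝ≥0∞) ∧
      (VN f ℓ N (x n) : ℝ≥0∞) ≤ Vinf f ℓ (x n) :=
  statement1_general f ℓ N μN x hx α hV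
end
end

section
/- Let ᾱ ∈ (0,1), let (N_n)_{n∈ℕ} be a sequence of horizon lengths attaining a finite maximum N⋆ = max{N_n : n ∈ ℕ}, let μ_N : X → U be a feedback law for each horizon N, and let x(·) be the closed loop x(n+1) = f(x(n), μ_{N_n}(x(n))), x(0) = x₀. Assume for all n ∈ ℕ: (i) the relaxed Lyapunov inequality V_{N_n}(x(n)) ≥ V_{N_n}(x(n+1)) + ᾱ·ℓ(x(n), μ_{N_n}(x(n))); (ii) ℓ(x(n), μ_{N_n}(x(n))) > 0, ℓ(x(n), μ_{N⋆}(x(n))) > 0 and V_{N⋆}(x(n)) − V_{N⋆}(f(x(n), μ_{N⋆}(x(n)))) > 0; (iii) there exist constants C_l(n), C_α(n) > 0 with ℓ(x(n), μ_{N_n}(x(n)))·(V_{N⋆}(x(n)) − V_{N⋆}(f(x(n), μ_{N⋆}(x(n))))) ≤ C_l(n)·ℓ(x(n), μ_{N⋆}(x(n)))·(V_{N⋆}(x(n)) − V_{N⋆}(f(x(n), μ_{N_n}(x(n))))) and α(N_n, x(n)) ≤ α(N⋆, x(n))/C_α(n), where α(N, x) := (V_N(x) − V_N(f(x, μ_N(x))))/ℓ(x,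 μ_N(x)) denotes the local suboptimality degree. Then, for each n ∈ ℕ, setting α_C := ᾱ·inf_{j≥n} C_α(j)/C_l(j), the chain α_C·V_∞(x(n)) ≤ α_C·Σ_{j=n}^{∞} ℓ(x(j), μ_{N_j}(x(j))) ≤ V_{N⋆}(x(n)) ≤ V_∞(x(n)) holds. -/
open scoped ENNReal NNReal

noncomputable section

variable {X U : Type*}

/-- Theorem on stability of adaptive NMPC with varying horizons.
Under the relaxed Lyapunov inequality with bound `ᾱ` for the varying horizons `N_n`,
positivity of stage costs and value decreases, and the comparison conditions with
constants `C_l(n), C_α(n)`, the closed loop with varying horizons satisfies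
`α_C V_∞(x(n)) ≤ α_C Σ_{j≥n} ℓ(x(j), μ_{N_j}(x(j))) ≤ V_{N⋆}(x(n)) ≤ V_∞(x(n))`,
where `α_C = ᾱ · inf_{j ≥ n} C_α(j)/C_l(j)`. -/
theorem statement3 {X U : Type*} [Nonempty X] [Nonempty U]
    (f : X → U → X) (ℓ : X → U → ℝ≥0)
    (abar : ℝ) (habar : abar ∈ Set.Ioo (0 : ℝ) 1)
    -- the sequence of horizons, attaining a finite maximum `N⋆`
    (Ns : ℕ → ℕ) (Nstar : ℕ) (hNle : ∀ n : ℕ, Ns n ≤ Nstar) (hNmax : ∃ n : ℕ, Ns n = Nstar)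
    -- a feedback law for each horizon, and the closed loop with varying horizons
    (μ : ℕ → X → U) (x₀ : X) (x : ℕ → X)
    (hx0 : x 0 = x₀)
    (hx : ∀ n : ℕ, x (n + 1) = f (x n) (μ (Ns n) (x n)))
    -- (i) relaxed Lyapunov inequality with bound `ᾱ`
    (hLyap : ∀ n : ℕ,
      (VN f ℓ (Ns n) (x (n + 1)) : ℝ) + abar * (ℓ (x n) (μ (Ns n) (x n)) : ℝ)
        ≤ (VN f ℓ (Ns n) (x n) : ℝ))
    -- (ii) positivity conditions
    (hl1 : ∀ n : ℕ, (0 : ℝ) < (ℓ (x n) (μ (Ns n) (x n)) : ℝ))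
    (hl2 : ∀ n : ℕ, (0 : ℝ) < (ℓ (x n) (μ Nstar (x n)) : ℝ))
    (hd2 : ∀ n : ℕ,
      (0 : ℝ) < (VN f ℓ Nstar (x n) : ℝ) - (VN f ℓ Nstar (f (x n) (μ Nstar (x n))) : ℝ))
    -- (iii) comparison constants `C_l(n)` and `C_α(n)`
    (Cl Ca : ℕ → ℝ) (hCl : ∀ n : ℕ, 0 < Cl n) (hCa : ∀ n : ℕ, 0 < Ca n)
    (hCl' : ∀ n : ℕ,
      (ℓ (x n) (μ (Ns n) (x n)) : ℝ) *
          ((VN f ℓ Nstar (x n) : ℝ) - (VN f ℓ Nstar (f (x n) (μ Nstar (x n))) : ℝ))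
        ≤ Cl n * (ℓ (x n) (μ Nstar (x n)) : ℝ) *
          ((VN f ℓ Nstar (x n) : ℝ) - (VN f ℓ Nstar (f (x n) (μ (Ns n) (x n))) : ℝ)))
    (hCa' : ∀ n : ℕ,
      ((VN f ℓ (Ns n) (x n) : ℝ) - (VN f ℓ (Ns n) (f (x n) (μ (Ns n) (x n))) : ℝ)) /
          (ℓ (x n) (μ (Ns n) (x n)) : ℝ)
        ≤ (((VN f ℓ Nstar (x n) : ℝ) - (VN f ℓ Nstar (f (x n) (μ Nstar (x n))) : ℝ)) /
          (ℓ (x n) (μ Nstar (x n)) : ℝ)) / Ca n) :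
    ∀ n : ℕ,
      ENNReal.ofReal (abar * sInf {r : ℝ | ∃ j : ℕ, n ≤ j ∧ r = Ca j / Cl j})
          * Vinf f ℓ (x n)
        ≤ ENNReal.ofReal (abar * sInf {r : ℝ | ∃ j : ℕ, n ≤ j ∧ r = Ca j / Cl j})
          * ∑' j : ℕ, (ℓ (x (n + j)) (μ (Ns (n + j)) (x (n + j))) : ℝ≥0∞) ∧
      ENNReal.ofReal (abar * sInf {r : ℝ | ∃ j : ℕ, n ≤ j ∧ r = Ca j / Cl j})
          * ∑' j : ℕ, (ℓ (x (n + j)) (μ (Ns (n + j)) (x (n + j))) : ℝ≥0∞)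
        ≤ (VN f ℓ Nstar (x n) : ℝ≥0∞) ∧
      (VN f ℓ Nstar (x n) : ℝ≥0∞) ≤ Vinf f ℓ (x n) := by
  obtain ⟨habar0, habar1⟩ := habar
  have hVN_le_Vinf : ∀ (N : ℕ) (y : X), (VN f ℓ N y : ℝ≥0∞) ≤ Vinf f ℓ y := by
    intro N y
    refine le_iInf fun u => ?_
    calc (VN f ℓ N y : ℝ≥0∞) ≤ (costJ f ℓ N y u : ℝ≥0∞) := by
          exact_mod_cast ciInf_le (OrderBot.bddBelow _) u
      _ ≤ ∑' k, (ℓ (otraj f u y k) (u k) : ℝ≥0∞) := by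
          rw [costJ]; push_cast; exact ENNReal.sum_le_tsum _
  intro n
  set S := {r : ℝ | ∃ j : ℕ, n ≤ j ∧ r = Ca j / Cl j} with hS
  have hSne : S.Nonempty := ⟨Ca n / Cl n, n, le_rfl, rfl⟩
  have hSbd : ∀ r ∈ S, (0:ℝ) ≤ r := by
    rintro r ⟨j, -, rfl⟩; exact div_nonneg (hCa j).le (hCl j).le
  have hInf0 : (0:ℝ) ≤ sInf S := le_csInf hSne hSbd
  have hαC0 : (0:ℝ) ≤ abar * sInf S := mul_nonneg habar0.le hInf0
  -- key per-step inequality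
  have key : ∀ m, n ≤ m →
      abar * sInf S * (ℓ (x m) (μ (Ns m) (x m)) : ℝ)
        ≤ (VN f ℓ Nstar (x m) : ℝ) - (VN f ℓ Nstar (x (m+1)) : ℝ) := by
    intro m hm
    have ha := hl1 m
    have hb := hl2 m
    have hD := hd2 m
    have hstep : abar ≤ ((VN f ℓ (Ns m) (x m) : ℝ)
        - (VN f ℓ (Ns m) (f (x m) (μ (Ns m) (x m))) : ℝ))
          / (ℓ (x m) (μ (Ns m) (x m)) : ℝ) := by
      rw [le_div_iff₀ ha]
      have h := hLyap m
      rw [hx m] at h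
      linarith
    have h1 : abar ≤ (((VN f ℓ Nstar (x m) : ℝ)
        - (VN f ℓ Nstar (f (x m) (μ Nstar (x m))) : ℝ))
          / (ℓ (x m) (μ Nstar (x m)) : ℝ)) / Ca m := hstep.trans (hCa' m)
    rw [le_div_iff₀ (hCa m), le_div_iff₀ hb] at h1
    -- h1 : abar * Ca m * ℓ⋆ ≤ D⋆
    have h3 := hCl' m
    rw [← hx m] at h3
    have hq : Ca m / Cl m * Cl m = Ca m := div_mul_cancel₀ _ (hCl m).ne'
    have hsle : sInf S ≤ Ca m / Cl m := csInf_le ⟨0, fun r hr => hSbd r hr⟩ ⟨m, hm, rfl⟩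
    have h5 : abar * Ca m * (ℓ (x m) (μ (Ns m) (x m)) : ℝ)
        ≤ Cl m * ((VN f ℓ Nstar (x m) : ℝ) - (VN f ℓ Nstar (x (m+1)) : ℝ)) := by
      nlinarith [mul_le_mul_of_nonneg_left h1 ha.le, h3, hb]
    have h4 : abar * (Ca m / Cl m) * (ℓ (x m) (μ (Ns m) (x m)) : ℝ)
        ≤ (VN f ℓ Nstar (x m) : ℝ) - (VN f ℓ Nstar (x (m+1)) : ℝ) := by
      have heq : abar * (Ca m / Cl m) * (ℓ (x m) (μ (Ns m) (x m)) : ℝ)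
          = abar * Ca m * (ℓ (x m) (μ (Ns m) (x m)) : ℝ) / Cl m := by ring
      rw [heq, div_le_iff₀ (hCl m)]
      linarith
    refine le_trans ?_ h4
    exact mul_le_mul_of_nonneg_right (mul_le_mul_of_nonneg_left hsle habar0.le) ha.le
  -- hpartial sums bound
  have hpartial : ∀ m : ℕ,
      abar * sInf S * ∑ j ∈ Finset.range m, (ℓ (x (n+j)) (μ (Ns (n+j)) (x (n+j))) : ℝ)
        ≤ (VN f ℓ Nstar (x n) : ℝ) := by
    intro m
    have hsum : ∑ j ∈ Finset.range m,
        (abar * sInf S * (ℓ (x (n+j)) (μ (Ns (n+j)) (x (n+j))) : ℝ))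
        ≤ ∑ j ∈ Finset.range m,
          ((VN f ℓ Nstar (x (n+j)) : ℝ) - (VN f ℓ Nstar (x (n+j+1)) : ℝ)) := by
      refine Finset.sum_le_sum fun j _ => ?_
      exact key (n+j) (Nat.le_add_right n j)
    have htel : ∑ j ∈ Finset.range m,
        ((VN f ℓ Nstar (x (n+j)) : ℝ) - (VN f ℓ Nstar (x (n+j+1)) : ℝ))
        = (VN f ℓ Nstar (x (n+0)) : ℝ) - (VN f ℓ Nstar (x (n+m)) : ℝ) := by
      exact Finset.sum_range_sub' (fun j => (VN f ℓ Nstar (x (n+j)) : ℝ)) m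
    rw [Finset.mul_sum]
    have hnn : (0:ℝ) ≤ (VN f ℓ Nstar (x (n+m)) : ℝ) := (VN f ℓ Nstar (x (n+m))).coe_nonneg
    calc _ ≤ _ := hsum
      _ = _ := htel
      _ ≤ (VN f ℓ Nstar (x n) : ℝ) := by simp only [Nat.add_zero]; linarith
  have part2 : ENNReal.ofReal (abar * sInf S)
      * ∑' j : ℕ, (ℓ (x (n + j)) (μ (Ns (n + j)) (x (n + j))) : ℝ≥0∞)
      ≤ (VN f ℓ Nstar (x n) : ℝ≥0∞) := by
    rw [← ENNReal.tsum_mul_left]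
    rw [ENNReal.tsum_eq_iSup_sum]
    refine iSup_le fun s => ?_
    obtain ⟨m, hsm⟩ := Finset.exists_nat_subset_range s
    calc ∑ j ∈ s, ENNReal.ofReal (abar * sInf S) * (ℓ (x (n+j)) (μ (Ns (n+j)) (x (n+j))) : ℝ≥0∞)
        ≤ ∑ j ∈ Finset.range m, ENNReal.ofReal (abar * sInf S) * (ℓ (x (n+j)) (μ (Ns (n+j)) (x (n+j))) : ℝ≥0∞) :=
          Finset.sum_le_sum_of_subset hsm
      _ = ENNReal.ofReal (abar * sInf S * ∑ j ∈ Finset.range m, (ℓ (x (n+j)) (μ (Ns (n+j)) (x (n+j))) : ℝ)) := by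
          rw [Finset.mul_sum, ENNReal.ofReal_sum_of_nonneg]
          · refine Finset.sum_congr rfl fun j _ => ?_
            rw [ENNReal.ofReal_mul hαC0, ENNReal.ofReal_coe_nnreal]
          · intro j _
            exact mul_nonneg hαC0 (ℓ _ _).coe_nonneg
      _ ≤ ENNReal.ofReal ((VN f ℓ Nstar (x n) : ℝ)) := ENNReal.ofReal_le_ofReal (hpartial m)
      _ = (VN f ℓ Nstar (x n) : ℝ≥0∞) := ENNReal.ofReal_coe_nnreal
  have part1 : Vinf f ℓ (x n)
      ≤ ∑' j : ℕ, (ℓ (x (n + j)) (μ (Ns (n + j)) (x (n + j))) : ℝ≥0∞) := by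
    set u : ℕ → U := fun j => μ (Ns (n+j)) (x (n+j)) with hu
    have hot : ∀ j, otraj f u (x n) j = x (n+j) := by
      intro j
      induction j with
      | zero => simp [otraj]
      | succ k ih =>
        show f (otraj f u (x n) k) (u k) = x (n + (k+1))
        rw [ih, ← Nat.add_assoc, hx (n+k)]
    calc Vinf f ℓ (x n) ≤ ∑' k, (ℓ (otraj f u (x n) k) (u k) : ℝ≥0∞) := iInf_le _ u
      _ = _ := by
        refine tsum_congr fun k => ?_
        rw [hot k]
  exact ⟨mul_le_mul_right part1 _, part2, hVN_le_Vinf Nstar (x n)⟩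
end
end

section
/- Let N̂ ≤ N be integers with N̂ ≥ 2, let γ_N > 0, and set α(N) := 1 − γ_N^{N−N̂+2}/(γ_N+1)^{N−N̂}. Let δ ∈ [0, 1−α(N)), let ϑ > 0, and let Ñ ≥ N̂ be an integer with Ñ ≥ N̂ + (ln((γ_N/(γ_N+1))^{N−N̂} − δ/γ_N²) − 2·ln(ϑ))/(ln(ϑ·γ_N) − ln(ϑ·γ_N + 1)). Then for every γ_Ñ with 0 < γ_Ñ ≤ ϑ·γ_N, the quantity α(Ñ) := 1 − γ_Ñ^{Ñ−N̂+2}/(γ_Ñ+1)^{Ñ−N̂} satisfies α(Ñ) ≥ α(N) + δ. -/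
/-! Write `1 - α = γ ^ (K + 2) / (γ + 1) ^ K = γ² (γ / (γ + 1)) ^ K`. This is increasing in `γ`,
so the worst case is `γ_Ñ = ϑ γ_N`, where it equals `γ_N² ϑ² r ^ (Ñ - N̂)` with
`r = ϑγ_N / (ϑγ_N + 1) < 1`. After taking logarithms, the lower bound on `Ñ` says exactly that
`ϑ² r ^ (Ñ - N̂) ≤ (γ_N / (γ_N + 1)) ^ (N - N̂) - δ / γ_N²`, i.e. `1 - α(Ñ) ≤ 1 - α(N) - δ`. -/

open Real

lemma pow_add_two_div_add_one_pow {x : ℝ} (hx : x + 1 ≠ 0) (K : ℕ) :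
    x ^ (K + 2) / (x + 1) ^ K = x ^ 2 * (x / (x + 1)) ^ K := by
  rw [div_pow]
  field_simp
  ring

lemma pow_add_two_div_add_one_pow_le {x y : ℝ} (hx : 0 ≤ x) (hxy : x ≤ y) (K : ℕ) :
    x ^ (K + 2) / (x + 1) ^ K ≤ y ^ (K + 2) / (y + 1) ^ K := by
  have hy : 0 ≤ y := hx.trans hxy
  rw [pow_add_two_div_add_one_pow (by positivity), pow_add_two_div_add_one_pow (by positivity)]
  have hratio : x / (x + 1) ≤ y / (y + 1) := by
    rw [div_le_div_iff₀ (by positivity) (by positivity)]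
    nlinarith
  gcongr

lemma pow_le_of_log_div_log_le {r c : ℝ} (hr0 : 0 < r) (hr1 : r < 1) (hc : 0 < c) {K : ℕ}
    (hK : log c / log r ≤ K) : r ^ K ≤ c := by
  have hlog : log r < 0 := log_neg hr0 hr1
  rw [div_le_iff_of_neg hlog] at hK
  rw [← log_le_log_iff (by positivity) hc, log_pow]
  linarith

theorem statement9_general (Nhat N : ℕ)
    (γN : ℝ) (hγN : 0 < γN)
    (δ : ℝ)
    (hδ1 : δ < 1 - (1 - γN ^ (N - Nhat + 2) / (γN + 1) ^ (N - Nhat)))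
    (ϑ : ℝ) (hϑ : 0 < ϑ)
    (Ntil : ℕ) (hNtil : Nhat ≤ Ntil)
    (hNtil' : (Nhat : ℝ) +
        (Real.log ((γN / (γN + 1)) ^ (N - Nhat) - δ / γN ^ 2) - 2 * Real.log ϑ) /
          (Real.log (ϑ * γN) - Real.log (ϑ * γN + 1))
      ≤ (Ntil : ℝ)) :
    ∀ γNtil : ℝ, 0 < γNtil → γNtil ≤ ϑ * γN →
      (1 - γN ^ (N - Nhat + 2) / (γN + 1) ^ (N - Nhat)) + δ
        ≤ 1 - γNtil ^ (Ntil - Nhat + 2) / (γNtil + 1) ^ (Ntil - Nhat) := by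
  intro x hx hxa
  set a := ϑ * γN
  have ha : 0 < a := mul_pos hϑ hγN
  set C := (γN / (γN + 1)) ^ (N - Nhat) - δ / γN ^ 2
  have hC : 0 < C := by
    rw [pow_add_two_div_add_one_pow (by positivity)] at hδ1
    rw [sub_pos, div_lt_iff₀ (by positivity)]
    linarith
  have hgeom : (a / (a + 1)) ^ (Ntil - Nhat) ≤ C / ϑ ^ 2 := by
    refine pow_le_of_log_div_log_le (by positivity) ((div_lt_one (by positivity)).2 (by linarith))
      (by positivity) ?_
    rw [log_div hC.ne' (by positivity), log_pow, log_div ha.ne' (by positivity),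
      Nat.cast_sub hNtil]
    push_cast
    linarith
  have hbound : a ^ (Ntil - Nhat + 2) / (a + 1) ^ (Ntil - Nhat)
      ≤ γN ^ (N - Nhat + 2) / (γN + 1) ^ (N - Nhat) - δ := calc
    _ = γN ^ 2 * (ϑ ^ 2 * (a / (a + 1)) ^ (Ntil - Nhat)) := by
      rw [pow_add_two_div_add_one_pow (by positivity)]
      ring
    _ ≤ γN ^ 2 * (ϑ ^ 2 * (C / ϑ ^ 2)) := by gcongr
    _ = _ := by
      rw [pow_add_two_div_add_one_pow (by positivity)]
      simp only [C]
      field_simp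
  linarith [pow_add_two_div_add_one_pow_le hx.le hxa (Ntil - Nhat)]

/-- Lemma: monotone improvement of the suboptimality degree.
With `α(N) = 1 − γ_N^{N−N̂+2}/(γ_N+1)^{N−N̂}`, `δ ∈ [0, 1−α(N))`, `ϑ > 0`, and
`Ñ ≥ N̂ + (ln((γ_N/(γ_N+1))^{N−N̂} − δ/γ_N²) − 2 ln ϑ)/(ln(ϑγ_N) − ln(ϑγ_N+1))`,
any `0 < γ_Ñ ≤ ϑ γ_N` yields `α(Ñ) = 1 − γ_Ñ^{Ñ−N̂+2}/(γ_Ñ+1)^{Ñ−N̂} ≥ α(N) + δ`. -/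
theorem statement9 (Nhat N : ℕ) (hNhat : 2 ≤ Nhat) (hNN : Nhat ≤ N)
    (γN : ℝ) (hγN : 0 < γN)
    (δ : ℝ) (hδ0 : 0 ≤ δ)
    (hδ1 : δ < 1 - (1 - γN ^ (N - Nhat + 2) / (γN + 1) ^ (N - Nhat)))
    (ϑ : ℝ) (hϑ : 0 < ϑ)
    (Ntil : ℕ) (hNtil : Nhat ≤ Ntil)
    (hNtil' : (Nhat : ℝ) +
        (Real.log ((γN / (γN + 1)) ^ (N - Nhat) - δ / γN ^ 2) - 2 * Real.log ϑ) /
          (Real.log (ϑ * γN) - Real.log (ϑ * γN + 1))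
      ≤ (Ntil : ℝ)) :
    ∀ γNtil : ℝ, 0 < γNtil → γNtil ≤ ϑ * γN →
      (1 - γN ^ (N - Nhat + 2) / (γN + 1) ^ (N - Nhat)) + δ
        ≤ 1 - γNtil ^ (Ntil - Nhat + 2) / (γNtil + 1) ^ (Ntil - Nhat) :=
  statement9_general Nhat N γN hγN δ hδ1 ϑ hϑ Ntil hNtil hNtil'
end

section
/- Let N̂ ≤ N be integers, let γ > 0, let ϑ ≥ 1 and δ ≥ 0 be real numbers with δ/γ² < (γ/(γ+1))^{N−N̂}, and define Ψ(N) := ⌈N̂ + (ln((γ/(γ+1))^{N−N̂} − δ/γ²) − 2·ln(ϑ))/(ln(ϑ·γ) − ln(ϑ·γ + 1))⌉. Then Ψ(N) ≥ N; moreover Ψ(N) > N whenever δ > 0 or ϑ > 1. -/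
/-- Lemma: the monotone prolongation map does not shorten.
For integers `N̂ ≤ N`, `γ > 0`, `ϑ ≥ 1`, `δ ≥ 0` with `δ/γ² < (γ/(γ+1))^{N−N̂}`, the map
`Ψ(N) = ⌈N̂ + (ln((γ/(γ+1))^{N−N̂} − δ/γ²) − 2 ln ϑ)/(ln(ϑγ) − ln(ϑγ+1))⌉`
satisfies `Ψ(N) ≥ N`, with strict inequality whenever `δ > 0` or `ϑ > 1`. -/
theorem statement10 (Nhat N : ℕ) (hNN : Nhat ≤ N)
    (γ : ℝ) (hγ : 0 < γ) (ϑ : ℝ) (hϑ : 1 ≤ ϑ) (δ : ℝ) (hδ : 0 ≤ δ)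
    (hδγ : δ / γ ^ 2 < (γ / (γ + 1)) ^ (N - Nhat)) :
    (N : ℤ) ≤ ⌈(Nhat : ℝ) +
        (Real.log ((γ / (γ + 1)) ^ (N - Nhat) - δ / γ ^ 2) - 2 * Real.log ϑ) /
          (Real.log (ϑ * γ) - Real.log (ϑ * γ + 1))⌉ ∧
    ((0 < δ ∨ 1 < ϑ) →
      (N : ℤ) < ⌈(Nhat : ℝ) +
        (Real.log ((γ / (γ + 1)) ^ (N - Nhat) - δ / γ ^ 2) - 2 * Real.log ϑ) /
          (Real.log (ϑ * γ) - Real.log (ϑ * γ + 1))⌉) := by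
  set k := N - Nhat with hkdef
  have hγ1 : (0:ℝ) < γ + 1 := by linarith
  have hϑγ : (0:ℝ) < ϑ * γ := by positivity
  have hD : Real.log (ϑ * γ) - Real.log (ϑ * γ + 1) < 0 := by
    have := Real.log_lt_log hϑγ (lt_add_one (ϑ * γ))
    linarith
  have hdnn : 0 ≤ δ / γ ^ 2 := by positivity
  have ha : 0 < (γ / (γ + 1)) ^ k - δ / γ ^ 2 := by linarith
  have hlog1 : Real.log ((γ / (γ + 1)) ^ k - δ / γ ^ 2)
      ≤ (k : ℝ) * Real.log (γ / (γ + 1)) := by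
    calc Real.log ((γ / (γ + 1)) ^ k - δ / γ ^ 2)
        ≤ Real.log ((γ / (γ + 1)) ^ k) := Real.log_le_log ha (by linarith)
      _ = (k : ℝ) * Real.log (γ / (γ + 1)) := by rw [Real.log_pow]
  have hlog2 : Real.log (γ / (γ + 1)) ≤ Real.log (ϑ * γ) - Real.log (ϑ * γ + 1) := by
    rw [← Real.log_div (ne_of_gt hϑγ) (by positivity)]
    apply Real.log_le_log (by positivity)
    rw [div_le_div_iff₀ hγ1 (by positivity)]
    nlinarith
  have hlog2k : (k : ℝ) * Real.log (γ / (γ + 1))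
      ≤ (k : ℝ) * (Real.log (ϑ * γ) - Real.log (ϑ * γ + 1)) :=
    mul_le_mul_of_nonneg_left hlog2 (Nat.cast_nonneg k)
  have hlogϑ : 0 ≤ Real.log ϑ := Real.log_nonneg hϑ
  have hNk : (Nhat : ℝ) + (k : ℝ) = (N : ℝ) := by
    rw [hkdef]; push_cast [Nat.cast_sub hNN]; ring
  constructor
  · have hnum : Real.log ((γ / (γ + 1)) ^ k - δ / γ ^ 2) - 2 * Real.log ϑ
        ≤ (k : ℝ) * (Real.log (ϑ * γ) - Real.log (ϑ * γ + 1)) := by linarith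
    have hfrac : (k : ℝ) ≤
        (Real.log ((γ / (γ + 1)) ^ k - δ / γ ^ 2) - 2 * Real.log ϑ) /
          (Real.log (ϑ * γ) - Real.log (ϑ * γ + 1)) :=
      (le_div_iff_of_neg hD).mpr hnum
    have : (N : ℝ) ≤ ((⌈(Nhat : ℝ) +
        (Real.log ((γ / (γ + 1)) ^ k - δ / γ ^ 2) - 2 * Real.log ϑ) /
          (Real.log (ϑ * γ) - Real.log (ϑ * γ + 1))⌉ : ℤ) : ℝ) :=
      le_trans (by linarith [hNk]) (Int.le_ceil _)
    exact_mod_cast this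
  · intro hcase
    have hnum : Real.log ((γ / (γ + 1)) ^ k - δ / γ ^ 2) - 2 * Real.log ϑ
        < (k : ℝ) * (Real.log (ϑ * γ) - Real.log (ϑ * γ + 1)) := by
      rcases hcase with hδ0 | hϑ1
      · have hlt : Real.log ((γ / (γ + 1)) ^ k - δ / γ ^ 2)
            < Real.log ((γ / (γ + 1)) ^ k) := by
          apply Real.log_lt_log ha
          have : 0 < δ / γ ^ 2 := by positivity
          linarith
        rw [Real.log_pow] at hlt
        linarith
      · have : 0 < Real.log ϑ := Real.log_pos hϑ1
        linarith
    have hfrac : (k : ℝ) <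
        (Real.log ((γ / (γ + 1)) ^ k - δ / γ ^ 2) - 2 * Real.log ϑ) /
          (Real.log (ϑ * γ) - Real.log (ϑ * γ + 1)) :=
      (lt_div_iff_of_neg hD).mpr hnum
    rw [Int.lt_ceil]
    push_cast
    linarith [hNk]
end
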